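/- arXiv:1403.7906 — 4 statements merged into one kernel-verified Lean document; each statement's English description precedes it below -/
import Mathlib

section
/- Let B and C be unital associative ℂ-algebras and E = Σᵢ bᵢ ⊗ cᵢ ∈ B ⊗ C an idempotent for which there exist an anti-homomorphism S_B : B → C with E(b⊗1) = E(1⊗S_B(b)) for all b ∈ B, and an anti-homomorphism S_C : C → B with (1⊗c)E = (S_C(c)⊗1)E for all c ∈ C. Let P = C ⊗ B with the tensor product algebra structure and define Δ_P : P → P ⊗ P by Δ_P(c⊗b) = Σᵢ (c ⊗ bᵢ) ⊗ (cᵢ ⊗ b). Then Δ_P is an algebra homomorphism and is coassociative: (Δ_P ⊗ id)∘Δ_P = (id ⊗ Δ_P)∘Δ_P. -/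
/-!
Inserting `F = Σ bᵢ ⊗ cᵢ` into the middle legs, `c ⊗ b ↦ Σ (c ⊗ bᵢ) ⊗ (cᵢ ⊗ b)`, is bilinear in
`(F, c ⊗ b)`, and on pure tensors the four legs multiply independently, so
`Δ_F(x) Δ_G(y) = Δ_{FG}(xy)`; with `F = G = E` idempotency gives multiplicativity.
Both iterates of `Δ_E` insert `E` twice, `c ⊗ E ⊗ E ⊗ b`, which gives coassociativity.
-/

open scoped TensorProduct

variable (B C : Type*) [Ring B] [Algebra ℂ B] [Ring C] [Algebra ℂ C]

/-- The coproduct `Δ_P : C ⊗ B → (C ⊗ B) ⊗ (C ⊗ B)`, `c ⊗ b ↦ c ⊗ E ⊗ b`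
(i.e. `Σᵢ (c ⊗ bᵢ) ⊗ (cᵢ ⊗ b)` when `E = Σᵢ bᵢ ⊗ cᵢ`). -/
noncomputable def DeltaP (E : B ⊗[ℂ] C) :
    (C ⊗[ℂ] B) →ₗ[ℂ] (C ⊗[ℂ] B) ⊗[ℂ] (C ⊗[ℂ] B) :=
  (TensorProduct.assoc ℂ (C ⊗[ℂ] B) C B).toLinearMap ∘ₗ
    (TensorProduct.congr ((TensorProduct.assoc ℂ C B C).symm)
      (LinearEquiv.refl ℂ B)).toLinearMap ∘ₗ
    (TensorProduct.assoc ℂ C (B ⊗[ℂ] C) B).symm.toLinearMap ∘ₗ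
    TensorProduct.map LinearMap.id (TensorProduct.mk ℂ (B ⊗[ℂ] C) B E)

section

variable {B C}

open TensorProduct

@[simp]
lemma DeltaP_tmul_tmul (b₀ : B) (c₀ : C) (c : C) (b : B) :
    DeltaP B C (b₀ ⊗ₜ[ℂ] c₀) (c ⊗ₜ[ℂ] b) = (c ⊗ₜ[ℂ] b₀) ⊗ₜ[ℂ] (c₀ ⊗ₜ[ℂ] b) := by
  simp [DeltaP]

@[simp]
lemma DeltaP_zero : DeltaP B C 0 = 0 := by
  simp [DeltaP]

lemma DeltaP_add (F G : B ⊗[ℂ] C) :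
    DeltaP B C (F + G) = DeltaP B C F + DeltaP B C G := by
  simp only [DeltaP, map_add, map_add_right, LinearMap.comp_add]

lemma DeltaP_mul_mul (F G : B ⊗[ℂ] C) (x y : C ⊗[ℂ] B) :
    DeltaP B C (F * G) (x * y) = DeltaP B C F x * DeltaP B C G y := by
  induction x using TensorProduct.induction_on with
  | zero => simp
  | add x₁ x₂ h₁ h₂ => simp only [add_mul, map_add, h₁, h₂]
  | tmul c b =>
  induction y using TensorProduct.induction_on with
  | zero => simp
  | add y₁ y₂ h₁ h₂ => simp only [mul_add, map_add, h₁, h₂]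
  | tmul c' b' =>
  induction F using TensorProduct.induction_on with
  | zero => simp
  | add F₁ F₂ h₁ h₂ => simp only [add_mul, DeltaP_add, LinearMap.add_apply, h₁, h₂]
  | tmul b₀ c₀ =>
  induction G using TensorProduct.induction_on with
  | zero => simp
  | add G₁ G₂ h₁ h₂ => simp only [mul_add, DeltaP_add, LinearMap.add_apply, h₁, h₂]
  | tmul b₁ c₁ => simp only [Algebra.TensorProduct.tmul_mul_tmul, DeltaP_tmul_tmul]

lemma DeltaP_coassoc (F G : B ⊗[ℂ] C) :
    (TensorProduct.assoc ℂ (C ⊗[ℂ] B) (C ⊗[ℂ] B) (C ⊗[ℂ] B)).toLinearMap ∘ₗ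
        map (DeltaP B C F) LinearMap.id ∘ₗ DeltaP B C G =
      map LinearMap.id (DeltaP B C G) ∘ₗ DeltaP B C F := by
  refine TensorProduct.ext' fun c b => ?_
  induction F using TensorProduct.induction_on with
  | zero => simp
  | add F₁ F₂ h₁ h₂ =>
    simpa only [LinearMap.comp_apply, DeltaP_add, map_add_left, LinearMap.add_apply, map_add]
      using congrArg₂ (· + ·) h₁ h₂
  | tmul b₁ c₁ =>
  induction G using TensorProduct.induction_on with
  | zero => simp
  | add G₁ G₂ h₁ h₂ =>
    simpa only [LinearMap.comp_apply, DeltaP_add, map_add_right, LinearMap.add_apply, map_add]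
      using congrArg₂ (· + ·) h₁ h₂
  | tmul b₀ c₀ => simp

end

theorem stmt9 (E : B ⊗[ℂ] C) (hE : E * E = E) :
    (∀ x y : C ⊗[ℂ] B, DeltaP B C E (x * y) = DeltaP B C E x * DeltaP B C E y) ∧
    (TensorProduct.assoc ℂ (C ⊗[ℂ] B) (C ⊗[ℂ] B) (C ⊗[ℂ] B)).toLinearMap ∘ₗ
        TensorProduct.map (DeltaP B C E) LinearMap.id ∘ₗ DeltaP B C E =
      TensorProduct.map LinearMap.id (DeltaP B C E) ∘ₗ DeltaP B C E :=
  ⟨fun x y => by simpa only [hE] using DeltaP_mul_mul E E x y, DeltaP_coassoc E E⟩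
end

section
/- In the same setting, φ_B(S_C(c)·b) = φ_C(c·S_B(b)) for all b ∈ B and c ∈ C; i.e., the left counit ε'_P(c⊗b) = φ_B(S_C(c)b) equals the right counit ε_P(c⊗b) = φ_C(cS_B(b)). -/
open scoped TensorProduct

open TensorProduct (map)

section Slice

variable {R A B : Type*} [CommSemiring R] [Semiring A] [Algebra R A] [Semiring B] [Algebra R B]

def sliceRight (ψ : B →ₗ[R] R) : A ⊗[R] B →ₗ[R] A :=
  (TensorProduct.rid R A).toLinearMap ∘ₗ map LinearMap.id ψ

def sliceLeft (φ : A →ₗ[R] R) : A ⊗[R] B →ₗ[R] B :=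
  (TensorProduct.lid R B).toLinearMap ∘ₗ map φ LinearMap.id

theorem sliceRight_tmul_one_mul_mul_tmul_one (ψ : B →ₗ[R] R) (a a' : A) (x : A ⊗[R] B) :
    sliceRight ψ ((a ⊗ₜ[R] (1 : B)) * x * (a' ⊗ₜ[R] (1 : B))) = a * sliceRight ψ x * a' := by
  induction x using TensorProduct.induction_on with
  | zero => simp
  | tmul p q => simp [sliceRight, Algebra.TensorProduct.tmul_mul_tmul]
  | add x y hx hy => simp only [mul_add, add_mul, map_add, hx, hy]

theorem sliceLeft_one_tmul_mul_mul_one_tmul (φ : A →ₗ[R] R) (b b' : B) (x : A ⊗[R] B) :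
    sliceLeft φ (((1 : A) ⊗ₜ[R] b) * x * ((1 : A) ⊗ₜ[R] b')) = b * sliceLeft φ x * b' := by
  induction x using TensorProduct.induction_on with
  | zero => simp
  | tmul p q => simp [sliceLeft, Algebra.TensorProduct.tmul_mul_tmul]
  | add x y hx hy => simp only [mul_add, add_mul, map_add, hx, hy]

/-- Both sides are `(φ ⊗ ψ) x`. -/
theorem apply_sliceRight_eq_apply_sliceLeft (φ : A →ₗ[R] R) (ψ : B →ₗ[R] R) (x : A ⊗[R] B) :
    φ (sliceRight ψ x) = ψ (sliceLeft φ x) := by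
  induction x using TensorProduct.induction_on with
  | zero => simp
  | tmul p q => simp [sliceRight, sliceLeft, mul_comm]
  | add x y hx hy => simp only [map_add, hx, hy]

end Slice

theorem stmt11_general {B C : Type*} [Ring B] [Algebra ℂ B] [Ring C] [Algebra ℂ C]
    (E : B ⊗[ℂ] C)
    (SB : B →ₗ[ℂ] C)
    (SC : C →ₗ[ℂ] B)
    (hSB : ∀ b : B, E * (b ⊗ₜ[ℂ] (1 : C)) = E * ((1 : B) ⊗ₜ[ℂ] SB b))
    (hSC : ∀ c : C, ((1 : B) ⊗ₜ[ℂ] c) * E = (SC c ⊗ₜ[ℂ] (1 : C)) * E)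
    (phiB : B →ₗ[ℂ] ℂ)
    (hphiB : (TensorProduct.lid ℂ C).toLinearMap
        (TensorProduct.map phiB LinearMap.id E) = 1)
    (phiC : C →ₗ[ℂ] ℂ)
    (hphiC : (TensorProduct.rid ℂ B).toLinearMap
        (TensorProduct.map LinearMap.id phiC E) = 1) :
    ∀ (b : B) (c : C), phiB (SC c * b) = phiC (c * SB b) := by
  intro b c
  have hmove : (SC c ⊗ₜ[ℂ] (1 : C)) * E * (b ⊗ₜ[ℂ] (1 : C)) =
      ((1 : B) ⊗ₜ[ℂ] c) * E * ((1 : B) ⊗ₜ[ℂ] SB b) := by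
    rw [← hSC, mul_assoc, hSB, mul_assoc]
  have hφB : sliceLeft phiB E = 1 := hphiB
  have hφC : sliceRight phiC E = 1 := hphiC
  calc phiB (SC c * b)
      = phiB (sliceRight phiC ((SC c ⊗ₜ[ℂ] (1 : C)) * E * (b ⊗ₜ[ℂ] (1 : C)))) := by
        rw [sliceRight_tmul_one_mul_mul_tmul_one, hφC, mul_one]
    _ = phiC (sliceLeft phiB (((1 : B) ⊗ₜ[ℂ] c) * E * ((1 : B) ⊗ₜ[ℂ] SB b))) := by
        rw [hmove, apply_sliceRight_eq_apply_sliceLeft]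
    _ = phiC (c * SB b) := by
        rw [sliceLeft_one_tmul_mul_mul_one_tmul, hφB, mul_one]

/-- for a separability idempotent `E ∈ B ⊗ C` with antipodal
anti-homomorphisms `S_B, S_C` and distinguished functionals `φ_B, φ_C`
(`(φ_B⊗id)(E) = 1_C`, `(id⊗φ_C)(E) = 1_B`), one has
`φ_B(S_C(c)·b) = φ_C(c·S_B(b))` for all `b ∈ B`, `c ∈ C`; i.e. the left and
right counits of `(P, Δ_P)` coincide. -/
theorem stmt11 {B C : Type*} [Ring B] [Algebra ℂ B] [Ring C] [Algebra ℂ C]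
    (E : B ⊗[ℂ] C) (hE : E * E = E)
    (SB : B →ₗ[ℂ] C) (SB_anti : ∀ b b' : B, SB (b * b') = SB b' * SB b)
    (SC : C →ₗ[ℂ] B) (SC_anti : ∀ c c' : C, SC (c * c') = SC c' * SC c)
    (hSB : ∀ b : B, E * (b ⊗ₜ[ℂ] (1 : C)) = E * ((1 : B) ⊗ₜ[ℂ] SB b))
    (hSC : ∀ c : C, ((1 : B) ⊗ₜ[ℂ] c) * E = (SC c ⊗ₜ[ℂ] (1 : C)) * E)
    (phiB : B →ₗ[ℂ] ℂ)
    (hphiB : (TensorProduct.lid ℂ C).toLinearMap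
        (TensorProduct.map phiB LinearMap.id E) = 1)
    (phiC : C →ₗ[ℂ] ℂ)
    (hphiC : (TensorProduct.rid ℂ B).toLinearMap
        (TensorProduct.map LinearMap.id phiC E) = 1) :
    ∀ (b : B) (c : C), phiB (SC c * b) = phiC (c * SB b) :=
  stmt11_general E SB SC hSB hSC phiB hphiB phiC hphiC
end

section
/- In the same setting (E ∈ B⊗C separability idempotent with S_B, S_C and counit ε_P), the map S_P : P → P on P = C⊗B defined by S_P(c⊗b) = S_B(b) ⊗ S_C(c) is an algebra anti-homomorphism, provided the images of S_B and S_C land in C and B respectively (regularity). Moreover, writing E = Σᵢ bᵢ⊗cᵢ and assuming Σᵢ bᵢ S_C(cᵢ) = 1_B and Σᵢ S_B(bᵢ) cᵢ = 1_C, the weak antipode identities hold: Σ (first leg of Δ_P)·S_P(second leg) applied to c⊗b gives Σᵢ (c⊗bᵢ)·S_P(cᵢ⊗b) = cS_B(b) ⊗ 1_B, and Σᵢ S_P(c⊗bᵢ)·(cᵢ⊗b) = 1_C ⊗ S_C(c)b. -/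
/-!
Since `Δ_P(c ⊗ b) = Σᵢ (c ⊗ bᵢ) ⊗ (cᵢ ⊗ b)`, multiplying out gives
`m(id ⊗ S_P)Δ_P(c ⊗ b) = c S_B(b) ⊗ Σᵢ bᵢ S_C(cᵢ)` and
`m(S_P ⊗ id)Δ_P(c ⊗ b) = (Σᵢ S_B(bᵢ) cᵢ) ⊗ S_C(c) b`, and the normalizations turn both sums into `1`.
Anti-multiplicativity of `S_P` is checked on simple tensors, where it is that of `S_B` and `S_C`.
-/

open scoped TensorProduct

variable (B C : Type*) [Ring B] [Algebra ℂ B] [Ring C] [Algebra ℂ C]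

/-- The antipode `S_P : C ⊗ B → C ⊗ B`, `c ⊗ b ↦ S_B(b) ⊗ S_C(c)`. -/
noncomputable def SP (SB : B →ₗ[ℂ] C) (SC : C →ₗ[ℂ] B) :
    (C ⊗[ℂ] B) →ₗ[ℂ] (C ⊗[ℂ] B) :=
  TensorProduct.map SB SC ∘ₗ (TensorProduct.comm ℂ C B).toLinearMap

open TensorProduct

variable {B C}

theorem SP_tmul (SB : B →ₗ[ℂ] C) (SC : C →ₗ[ℂ] B) (c : C) (b : B) :
    SP B C SB SC (c ⊗ₜ b) = SB b ⊗ₜ SC c :=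
  rfl

theorem SP_mul {SB : B →ₗ[ℂ] C} {SC : C →ₗ[ℂ] B}
    (SB_anti : ∀ b b' : B, SB (b * b') = SB b' * SB b)
    (SC_anti : ∀ c c' : C, SC (c * c') = SC c' * SC c) (x y : C ⊗[ℂ] B) :
    SP B C SB SC (x * y) = SP B C SB SC y * SP B C SB SC x := by
  induction x using TensorProduct.induction_on with
  | zero => simp
  | add x x' hx hx' => simp only [add_mul, mul_add, map_add, hx, hx']
  | tmul c b =>
    induction y using TensorProduct.induction_on with
    | zero => simp
    | add y y' hy hy' => simp only [add_mul, mul_add, map_add, hy, hy']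
    | tmul c' b' => simp only [Algebra.TensorProduct.tmul_mul_tmul, SP_tmul, SB_anti, SC_anti]

theorem DeltaP_tmul (E : B ⊗[ℂ] C) (c : C) (b : B) :
    DeltaP B C E (c ⊗ₜ b) = map (mk ℂ C B c) ((mk ℂ C B).flip b) E := by
  induction E using TensorProduct.induction_on with
  | zero => simp [DeltaP]
  | tmul b₁ c₁ => simp [DeltaP]
  | add e e' he he' =>
    rw [map_add, ← he, ← he']
    simp [DeltaP, tmul_add]

theorem mul'_map_id_SP_DeltaP_tmul (SB : B →ₗ[ℂ] C) (SC : C →ₗ[ℂ] B) (E : B ⊗[ℂ] C)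
    (c : C) (b : B) :
    LinearMap.mul' ℂ (C ⊗[ℂ] B) (map LinearMap.id (SP B C SB SC) (DeltaP B C E (c ⊗ₜ b)))
      = (c * SB b) ⊗ₜ LinearMap.mul' ℂ B (map LinearMap.id SC E) := by
  rw [DeltaP_tmul]
  induction E using TensorProduct.induction_on with
  | zero => simp
  | tmul b₁ c₁ => simp [SP_tmul]
  | add e e' he he' => simp only [map_add, he, he', tmul_add]

theorem mul'_map_SP_id_DeltaP_tmul (SB : B →ₗ[ℂ] C) (SC : C →ₗ[ℂ] B) (E : B ⊗[ℂ] C)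
    (c : C) (b : B) :
    LinearMap.mul' ℂ (C ⊗[ℂ] B) (map (SP B C SB SC) LinearMap.id (DeltaP B C E (c ⊗ₜ b)))
      = LinearMap.mul' ℂ C (map SB LinearMap.id E) ⊗ₜ (SC c * b) := by
  rw [DeltaP_tmul]
  induction E using TensorProduct.induction_on with
  | zero => simp
  | tmul b₁ c₁ => simp [SP_tmul]
  | add e e' he he' => simp only [map_add, he, he', add_tmul]

variable (B C)

theorem stmt12 (E : B ⊗[ℂ] C)
    (SB : B →ₗ[ℂ] C) (SB_anti : ∀ b b' : B, SB (b * b') = SB b' * SB b)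
    (SC : C →ₗ[ℂ] B) (SC_anti : ∀ c c' : C, SC (c * c') = SC c' * SC c)
    (hnormB : LinearMap.mul' ℂ B (TensorProduct.map LinearMap.id SC E) = 1)
    (hnormC : LinearMap.mul' ℂ C (TensorProduct.map SB LinearMap.id E) = 1) :
    (∀ x y : C ⊗[ℂ] B, SP B C SB SC (x * y) = SP B C SB SC y * SP B C SB SC x) ∧
    (∀ (c : C) (b : B),
      LinearMap.mul' ℂ (C ⊗[ℂ] B)
          (TensorProduct.map LinearMap.id (SP B C SB SC) (DeltaP B C E (c ⊗ₜ[ℂ] b)))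
        = (c * SB b) ⊗ₜ[ℂ] (1 : B)) ∧
    (∀ (c : C) (b : B),
      LinearMap.mul' ℂ (C ⊗[ℂ] B)
          (TensorProduct.map (SP B C SB SC) LinearMap.id (DeltaP B C E (c ⊗ₜ[ℂ] b)))
        = (1 : C) ⊗ₜ[ℂ] (SC c * b)) :=
  ⟨SP_mul SB_anti SC_anti,
    fun c b => by rw [mul'_map_id_SP_DeltaP_tmul, hnormB],
    fun c b => by rw [mul'_map_SP_id_DeltaP_tmul, hnormC]⟩
end

section
/- Let Q be a Hopf algebra, B a right Q-module algebra, C a left Q-module algebra (both unital), and E = Σᵢ bᵢ⊗cᵢ ∈ B⊗C an element satisfying the compatibility Σᵢ (bᵢ◁q)⊗cᵢ = Σᵢ bᵢ⊗(q▷cᵢ) for all q ∈ Q. Then in the two-sided smash product algebra P (with B, C, Q viewed as subalgebras via b ↦ 1⊗1⊗b etc. and commutation rules bq = Σ q₍₁₎(b◁q₍₂₎), qc = Σ (q₍₁₎▷c)q₍₂₎), the element E (sitting in P⊗P as Σᵢ (1⊗1⊗bᵢ)⊗(cᵢ⊗1⊗1)) commutes with Δ(q) := Σ (1⊗q₍₁₎⊗1)⊗(1⊗q₍₂₎⊗1)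 for all q ∈ Q. -/
open scoped TensorProduct

/-!
By the commutation rules `b q = q₍₁₎ (b ◁ q₍₂₎)` and `q c = (q₍₁₎ ▷ c) q₍₂₎` of the smash product,
the two sides are images of the iterated coproduct of `q`: the left side is
`Σ (1 ⊗ q₍₁₎ ⊗ bᵢ ◁ q₍₂₎) ⊗ (cᵢ ⊗ q₍₃₎ ⊗ 1)`, computed from `(Δ ⊗ id) Δ q`, and the right side is
`Σ (1 ⊗ q₍₁₎ ⊗ bᵢ) ⊗ (q₍₂₎ ▷ cᵢ ⊗ q₍₃₎ ⊗ 1)`, computed from `(id ⊗ Δ) Δ q`. The compatibility of `E`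
moves the action of `q₍₂₎` from the `bᵢ` to the `cᵢ`, and coassociativity identifies the two
iterated coproducts.
-/

theorem Coalgebra.sum_counit_smul_right {R A : Type*} [CommSemiring R] [AddCommMonoid A]
    [Module R A] [Coalgebra R A] {a : A} {ι : Type*} (𝓡 : Coalgebra.Repr R a ι) :
    ∑ i ∈ 𝓡.index, counit (R := R) (𝓡.right i) • 𝓡.left i = a := by
  simpa only [map_sum, _root_.TensorProduct.rid_tmul, map_one, one_smul] using
    congrArg (_root_.TensorProduct.rid R A) (Coalgebra.sum_tmul_counit_eq 𝓡)

theorem Bialgebra.comul_one_eq_sum_unit {R A : Type*} [CommSemiring R] [Semiring A]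
    [Bialgebra R A] :
    Coalgebra.comul (R := R) (1 : A) =
      ∑ _i ∈ (Finset.univ : Finset Unit), (1 : A) ⊗ₜ[R] (1 : A) := by
  simp [Algebra.TensorProduct.one_def]

namespace TwoSidedSmashProduct

-- `Q : Type` so that the representations `Coalgebra.Repr.arbitrary`, indexed by `Q × Q`, can be
-- fed to the `Type`-indexed sums of `IsSmashMul`.
variable {R B C : Type*} {Q : Type} [CommSemiring R] [Semiring Q] [Bialgebra R Q]
  [Semiring B] [Algebra R B] [Semiring C] [Algebra R C]
  {act : Q →ₗ[R] C →ₗ[R] C} {ract : Q →ₗ[R] B →ₗ[R] B}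
  {mulP : (C ⊗[R] (Q ⊗[R] B)) →ₗ[R] (C ⊗[R] (Q ⊗[R] B)) →ₗ[R] (C ⊗[R] (Q ⊗[R] B))}

variable (act ract mulP) in
def IsSmashMul : Prop :=
  ∀ (q q' : Q) {ι κ : Type} (s : Finset ι) (t : Finset κ)
      (x y : ι → Q) (u v : κ → Q),
      Coalgebra.comul (R := R) q = ∑ i ∈ s, x i ⊗ₜ[R] y i →
      Coalgebra.comul (R := R) q' = ∑ j ∈ t, u j ⊗ₜ[R] v j →
      ∀ (c c' : C) (b b' : B),
        mulP (c ⊗ₜ[R] (q ⊗ₜ[R] b)) (c' ⊗ₜ[R] (q' ⊗ₜ[R] b')) =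
          ∑ i ∈ s, ∑ j ∈ t,
            (c * act (x i) c') ⊗ₜ[R] ((y i * u j) ⊗ₜ[R] (ract (v j) b * b'))

variable (R C) in
def sandwich (c : C) (b : B) : Q →ₗ[R] C ⊗[R] (Q ⊗[R] B) :=
  TensorProduct.mk R C _ c ∘ₗ (TensorProduct.mk R Q B).flip b

@[simp]
theorem sandwich_apply (c : C) (b : B) (q : Q) : sandwich R C c b q = c ⊗ₜ (q ⊗ₜ b) := rfl

variable (C) in
def bMulQ (ract : Q →ₗ[R] B →ₗ[R] B) (b : B) : Q ⊗[R] Q →ₗ[R] C ⊗[R] (Q ⊗[R] B) :=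
  TensorProduct.mk R C _ 1 ∘ₗ TensorProduct.map LinearMap.id (ract.flip b)

@[simp]
theorem bMulQ_tmul (b : B) (q₁ q₂ : Q) :
    bMulQ C ract b (q₁ ⊗ₜ q₂) = (1 : C) ⊗ₜ (q₁ ⊗ₜ ract q₂ b) := rfl

variable (B) in
def qMulC (act : Q →ₗ[R] C →ₗ[R] C) (c : C) : Q ⊗[R] Q →ₗ[R] C ⊗[R] (Q ⊗[R] B) :=
  TensorProduct.map (act.flip c) ((TensorProduct.mk R Q B).flip 1)

@[simp]
theorem qMulC_tmul (c : C) (q₁ q₂ : Q) :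
    qMulC B act c (q₁ ⊗ₜ q₂) = act q₁ c ⊗ₜ (q₂ ⊗ₜ (1 : B)) := rfl

theorem IsSmashMul.tmul_one_mul (hmul : IsSmashMul act ract mulP) (hact_one : ∀ c, act 1 c = c)
    {q : Q} {ι : Type} (𝓡 : Coalgebra.Repr R q ι) (c c' : C) (b b' : B) :
    mulP (c ⊗ₜ (1 ⊗ₜ b)) (c' ⊗ₜ (q ⊗ₜ b')) =
      ∑ i ∈ 𝓡.index, (c * c') ⊗ₜ (𝓡.left i ⊗ₜ (ract (𝓡.right i) b * b')) := by
  rw [hmul 1 q Finset.univ 𝓡.index (fun _ => 1) (fun _ => 1) 𝓡.left 𝓡.right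
    Bialgebra.comul_one_eq_sum_unit 𝓡.eq.symm]
  simp [hact_one]

theorem IsSmashMul.mul_tmul_one (hmul : IsSmashMul act ract mulP) (hract_one : ∀ b, ract 1 b = b)
    {q : Q} {ι : Type} (𝓡 : Coalgebra.Repr R q ι) (c c' : C) (b b' : B) :
    mulP (c ⊗ₜ (q ⊗ₜ b)) (c' ⊗ₜ (1 ⊗ₜ b')) =
      ∑ i ∈ 𝓡.index, (c * act (𝓡.left i) c') ⊗ₜ (𝓡.right i ⊗ₜ (b * b')) := by
  rw [hmul q 1 𝓡.index Finset.univ 𝓡.left 𝓡.right (fun _ => 1) (fun _ => 1)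
    𝓡.eq.symm Bialgebra.comul_one_eq_sum_unit]
  simp [hract_one]

theorem IsSmashMul.b_mul_q (hmul : IsSmashMul act ract mulP) (hact_one : ∀ c, act 1 c = c)
    (b : B) :
    mulP ((1 : C) ⊗ₜ (1 ⊗ₜ b)) ∘ₗ sandwich R C 1 1 = bMulQ C ract b ∘ₗ Coalgebra.comul := by
  ext q
  let 𝓡 := Coalgebra.Repr.arbitrary R q
  simp [hmul.tmul_one_mul hact_one 𝓡, ← 𝓡.eq]

theorem IsSmashMul.c_mul_q (hmul : IsSmashMul act ract mulP) (hact_one : ∀ c, act 1 c = c)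
    (hract_unit : ∀ q : Q, ract q 1 = Coalgebra.counit (R := R) q • (1 : B)) (c : C) :
    mulP (c ⊗ₜ ((1 : Q) ⊗ₜ (1 : B))) ∘ₗ sandwich R C 1 1 = sandwich R C c 1 := by
  ext q
  let 𝓡 := Coalgebra.Repr.arbitrary R q
  conv_rhs => rw [← Coalgebra.sum_counit_smul_right 𝓡]
  simp [hmul.tmul_one_mul hact_one 𝓡, hract_unit, TensorProduct.tmul_smul]

theorem IsSmashMul.q_mul_b (hmul : IsSmashMul act ract mulP) (hract_one : ∀ b, ract 1 b = b)
    (hact_unit : ∀ q : Q, act q 1 = Coalgebra.counit (R := R) q • (1 : C)) (b : B) :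
    mulP.flip ((1 : C) ⊗ₜ ((1 : Q) ⊗ₜ b)) ∘ₗ sandwich R C 1 1 = sandwich R C 1 b := by
  ext q
  let 𝓡 := Coalgebra.Repr.arbitrary R q
  conv_rhs => rw [← Coalgebra.sum_counit_smul 𝓡]
  simp [hmul.mul_tmul_one hract_one 𝓡, hact_unit, ← TensorProduct.smul_tmul']

theorem IsSmashMul.q_mul_c (hmul : IsSmashMul act ract mulP) (hract_one : ∀ b, ract 1 b = b)
    (c : C) :
    mulP.flip (c ⊗ₜ ((1 : Q) ⊗ₜ (1 : B))) ∘ₗ sandwich R C 1 1 =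
      qMulC B act c ∘ₗ Coalgebra.comul := by
  ext q
  let 𝓡 := Coalgebra.Repr.arbitrary R q
  simp [hmul.mul_tmul_one hract_one 𝓡, ← 𝓡.eq]

theorem sum_map_bMulQ_eq_comp_assoc {κ : Type*} (t : Finset κ) (bb : κ → B) (cc : κ → C)
    (E : B ⊗[R] C) (hE : E = ∑ j ∈ t, bb j ⊗ₜ cc j)
    (hcompat : ∀ q : Q, TensorProduct.map (ract q) LinearMap.id E =
      TensorProduct.map LinearMap.id (act q) E) :
    ∑ j ∈ t, TensorProduct.map (bMulQ C ract (bb j)) (sandwich R C (cc j) (1 : B)) =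
      (∑ j ∈ t, TensorProduct.map (sandwich R C 1 (bb j)) (qMulC B act (cc j))) ∘ₗ
        (TensorProduct.assoc R Q Q Q).toLinearMap := by
  refine TensorProduct.ext_threefold fun q₁ q₂ q₃ => ?_
  -- the compatibility for `q₂`, pushed through `b ⊗ c ↦ (1 ⊗ q₁ ⊗ b) ⊗ (c ⊗ q₃ ⊗ 1)`
  have h := congrArg (TensorProduct.map (TensorProduct.mk R C _ 1 ∘ₗ TensorProduct.mk R Q B q₁)
    ((TensorProduct.mk R C (Q ⊗[R] B)).flip (q₃ ⊗ₜ (1 : B)))) (hcompat q₂)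
  subst hE
  simpa [map_sum] using h

end TwoSidedSmashProduct

open TwoSidedSmashProduct in
theorem stmt14_general {Q B C : Type} [Ring Q] [HopfAlgebra ℂ Q]
    [Ring B] [Algebra ℂ B] [Ring C] [Algebra ℂ C]
    (act : Q →ₗ[ℂ] C →ₗ[ℂ] C) (ract : Q →ₗ[ℂ] B →ₗ[ℂ] B)
    (hact_one : ∀ c : C, act 1 c = c)
    (hact_unit : ∀ q : Q, act q 1 = Coalgebra.counit (R := ℂ) q • (1 : C))
    (hract_one : ∀ b : B, ract 1 b = b)
    (hract_unit : ∀ q : Q, ract q 1 = Coalgebra.counit (R := ℂ) q • (1 : B))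
    (mulP : (C ⊗[ℂ] (Q ⊗[ℂ] B)) →ₗ[ℂ] (C ⊗[ℂ] (Q ⊗[ℂ] B)) →ₗ[ℂ] (C ⊗[ℂ] (Q ⊗[ℂ] B)))
    (hmul : ∀ (q q' : Q) {ι κ : Type} (s : Finset ι) (t : Finset κ)
      (x y : ι → Q) (u v : κ → Q),
      Coalgebra.comul (R := ℂ) q = ∑ i ∈ s, x i ⊗ₜ[ℂ] y i →
      Coalgebra.comul (R := ℂ) q' = ∑ j ∈ t, u j ⊗ₜ[ℂ] v j →
      ∀ (c c' : C) (b b' : B),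
        mulP (c ⊗ₜ[ℂ] (q ⊗ₜ[ℂ] b)) (c' ⊗ₜ[ℂ] (q' ⊗ₜ[ℂ] b')) =
          ∑ i ∈ s, ∑ j ∈ t,
            (c * act (x i) c') ⊗ₜ[ℂ] ((y i * u j) ⊗ₜ[ℂ] (ract (v j) b * b')))
    (E : B ⊗[ℂ] C)
    (hcompat : ∀ q : Q,
      TensorProduct.map (ract q) LinearMap.id E =
        TensorProduct.map LinearMap.id (act q) E) :
    ∀ (q : Q) {ι κ : Type} (s : Finset ι) (x y : ι → Q)
      (t : Finset κ) (bb : κ → B) (cc : κ → C),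
      Coalgebra.comul (R := ℂ) q = ∑ i ∈ s, x i ⊗ₜ[ℂ] y i →
      E = ∑ j ∈ t, bb j ⊗ₜ[ℂ] cc j →
      (∑ j ∈ t, ∑ i ∈ s,
          mulP ((1 : C) ⊗ₜ[ℂ] ((1 : Q) ⊗ₜ[ℂ] bb j)) ((1 : C) ⊗ₜ[ℂ] (x i ⊗ₜ[ℂ] (1 : B)))
            ⊗ₜ[ℂ]
          mulP (cc j ⊗ₜ[ℂ] ((1 : Q) ⊗ₜ[ℂ] (1 : B))) ((1 : C) ⊗ₜ[ℂ] (y i ⊗ₜ[ℂ] (1 : B))))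
        =
      (∑ j ∈ t, ∑ i ∈ s,
          mulP ((1 : C) ⊗ₜ[ℂ] (x i ⊗ₜ[ℂ] (1 : B))) ((1 : C) ⊗ₜ[ℂ] ((1 : Q) ⊗ₜ[ℂ] bb j))
            ⊗ₜ[ℂ]
          mulP ((1 : C) ⊗ₜ[ℂ] (y i ⊗ₜ[ℂ] (1 : B))) (cc j ⊗ₜ[ℂ] ((1 : Q) ⊗ₜ[ℂ] (1 : B)))) := by
  intro q ι κ s x y t bb cc hq hE
  have hP : IsSmashMul act ract mulP := hmul
  calc _ = ∑ j ∈ t, TensorProduct.map (mulP (1 ⊗ₜ (1 ⊗ₜ bb j)) ∘ₗ sandwich ℂ C 1 (1 : B))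
        (mulP (cc j ⊗ₜ (1 ⊗ₜ 1)) ∘ₗ sandwich ℂ C 1 (1 : B)) (Coalgebra.comul q) := by
        simp [hq, map_sum]
    _ = ∑ j ∈ t, TensorProduct.map (bMulQ C ract (bb j)) (sandwich ℂ C (cc j) (1 : B))
        (Coalgebra.comul.rTensor Q (Coalgebra.comul q)) := by
        simp_rw [hP.b_mul_q hact_one, hP.c_mul_q hact_one hract_unit, LinearMap.map_rTensor]
    _ = ∑ j ∈ t, TensorProduct.map (sandwich ℂ C 1 (bb j)) (qMulC B act (cc j))
        (Coalgebra.comul.lTensor Q (Coalgebra.comul q)) := by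
        rw [← LinearMap.sum_apply, sum_map_bMulQ_eq_comp_assoc t bb cc E hE hcompat,
          LinearMap.comp_apply, LinearEquiv.coe_coe, Coalgebra.coassoc_apply, LinearMap.sum_apply]
    _ = ∑ j ∈ t, TensorProduct.map (mulP.flip (1 ⊗ₜ (1 ⊗ₜ bb j)) ∘ₗ sandwich ℂ C 1 (1 : B))
        (mulP.flip (cc j ⊗ₜ (1 ⊗ₜ 1)) ∘ₗ sandwich ℂ C 1 (1 : B)) (Coalgebra.comul q) := by
        simp_rw [hP.q_mul_b hract_one hact_unit, hP.q_mul_c hract_one, LinearMap.map_lTensor]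
    _ = _ := by
        simp [hq, map_sum]

/-- with `Q` a Hopf algebra, `B` a unital right `Q`-module
algebra, `C` a unital left `Q`-module algebra, `P = C ⊗ Q ⊗ B` the two-sided
smash product, and `E = Σᵢ bᵢ ⊗ cᵢ ∈ B ⊗ C` satisfying the compatibility
`Σᵢ (bᵢ◁q) ⊗ cᵢ = Σᵢ bᵢ ⊗ (q▷cᵢ)`, the element `E` (sitting in `P ⊗ P` as
`Σᵢ (1⊗1⊗bᵢ) ⊗ (cᵢ⊗1⊗1)`) commutes with `Δ(q) = Σ (1⊗q₍₁₎⊗1) ⊗ (1⊗q₍₂₎⊗1)`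
for every `q ∈ Q`. -/
theorem stmt14 {Q B C : Type} [Ring Q] [HopfAlgebra ℂ Q]
    [Ring B] [Algebra ℂ B] [Ring C] [Algebra ℂ C]
    (act : Q →ₗ[ℂ] C →ₗ[ℂ] C) (ract : Q →ₗ[ℂ] B →ₗ[ℂ] B)
    (hact_mul : ∀ (q q' : Q) (c : C), act (q * q') c = act q (act q' c))
    (hact_one : ∀ c : C, act 1 c = c)
    (hact_alg : ∀ (q : Q) {ι : Type} (s : Finset ι) (x y : ι → Q),
      Coalgebra.comul (R := ℂ) q = ∑ i ∈ s, x i ⊗ₜ[ℂ] y i →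
      ∀ c c' : C, act q (c * c') = ∑ i ∈ s, act (x i) c * act (y i) c')
    (hact_unit : ∀ q : Q, act q 1 = Coalgebra.counit (R := ℂ) q • (1 : C))
    (hract_mul : ∀ (q q' : Q) (b : B), ract (q * q') b = ract q' (ract q b))
    (hract_one : ∀ b : B, ract 1 b = b)
    (hract_alg : ∀ (q : Q) {ι : Type} (s : Finset ι) (x y : ι → Q),
      Coalgebra.comul (R := ℂ) q = ∑ i ∈ s, x i ⊗ₜ[ℂ] y i →
      ∀ b b' : B, ract q (b * b') = ∑ i ∈ s, ract (x i) b * ract (y i) b')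
    (hract_unit : ∀ q : Q, ract q 1 = Coalgebra.counit (R := ℂ) q • (1 : B))
    (mulP : (C ⊗[ℂ] (Q ⊗[ℂ] B)) →ₗ[ℂ] (C ⊗[ℂ] (Q ⊗[ℂ] B)) →ₗ[ℂ] (C ⊗[ℂ] (Q ⊗[ℂ] B)))
    (hmul : ∀ (q q' : Q) {ι κ : Type} (s : Finset ι) (t : Finset κ)
      (x y : ι → Q) (u v : κ → Q),
      Coalgebra.comul (R := ℂ) q = ∑ i ∈ s, x i ⊗ₜ[ℂ] y i →
      Coalgebra.comul (R := ℂ) q' = ∑ j ∈ t, u j ⊗ₜ[ℂ] v j →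
      ∀ (c c' : C) (b b' : B),
        mulP (c ⊗ₜ[ℂ] (q ⊗ₜ[ℂ] b)) (c' ⊗ₜ[ℂ] (q' ⊗ₜ[ℂ] b')) =
          ∑ i ∈ s, ∑ j ∈ t,
            (c * act (x i) c') ⊗ₜ[ℂ] ((y i * u j) ⊗ₜ[ℂ] (ract (v j) b * b')))
    (E : B ⊗[ℂ] C)
    (hcompat : ∀ q : Q,
      TensorProduct.map (ract q) LinearMap.id E =
        TensorProduct.map LinearMap.id (act q) E) :
    ∀ (q : Q) {ι κ : Type} (s : Finset ι) (x y : ι → Q)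
      (t : Finset κ) (bb : κ → B) (cc : κ → C),
      Coalgebra.comul (R := ℂ) q = ∑ i ∈ s, x i ⊗ₜ[ℂ] y i →
      E = ∑ j ∈ t, bb j ⊗ₜ[ℂ] cc j →
      (∑ j ∈ t, ∑ i ∈ s,
          mulP ((1 : C) ⊗ₜ[ℂ] ((1 : Q) ⊗ₜ[ℂ] bb j)) ((1 : C) ⊗ₜ[ℂ] (x i ⊗ₜ[ℂ] (1 : B)))
            ⊗ₜ[ℂ]
          mulP (cc j ⊗ₜ[ℂ] ((1 : Q) ⊗ₜ[ℂ] (1 : B))) ((1 : C) ⊗ₜ[ℂ] (y i ⊗ₜ[ℂ] (1 : B))))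
        =
      (∑ j ∈ t, ∑ i ∈ s,
          mulP ((1 : C) ⊗ₜ[ℂ] (x i ⊗ₜ[ℂ] (1 : B))) ((1 : C) ⊗ₜ[ℂ] ((1 : Q) ⊗ₜ[ℂ] bb j))
            ⊗ₜ[ℂ]
          mulP ((1 : C) ⊗ₜ[ℂ] (y i ⊗ₜ[ℂ] (1 : B))) (cc j ⊗ₜ[ℂ] ((1 : Q) ⊗ₜ[ℂ] (1 : B)))) :=
  stmt14_general act ract hact_one hact_unit hract_one hract_unit mulP hmul E hcompat
end
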